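/- Let h be a finite dimensional Leibniz algebra with basis e_1,…,e_n and structure constants τ, and let g be a Leibniz algebra with basis {f_i}_{i∈I} and structure constants β. Define A(h,g) as the quotient of the polynomial algebra k[X_{si} | s = 1..n, i ∈ I] by the ideal J generated by the polynomials P_{(a,i,j)} = Σ_u β^u_{ij} X_{au} - Σ_{s,t} τ^a_{st} X_{si} X_{tj}. Then the linear map η_g : g → h ⊗ A(h,g) defined on the basis by η_g(f_i) = Σ_s e_s ⊗ x_{si} (where x_{si} denotes the class of X_{si}) is a homomorphism of Leibniz algebras. -/

import Mathlib

open TensorProduct MvPolynomial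

/-- The universal polynomial `P_{(a,i,j)} = Σ_u β^u_{ij} X_{au} - Σ_{s,t} τ^a_{st} X_{si} X_{tj}`. -/
noncomputable def univPoly {k : Type*} [Field k] {n : ℕ} {I : Type*}
    (τ : Fin n → Fin n → Fin n → k) (β : I → I → I →₀ k)
    (a : Fin n) (i j : I) : MvPolynomial (Fin n × I) k :=
  (β i j).sum (fun u c => C c * X (a, u)) -
    ∑ s : Fin n, ∑ t : Fin n, C (τ s t a) * X (s, i) * X (t, j)

/-- The ideal generated by the universal polynomials. -/
noncomputable def univIdeal {k : Type*} [Field k] {n : ℕ} {I : Type*}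
    (τ : Fin n → Fin n → Fin n → k) (β : I → I → I →₀ k) :
    Ideal (MvPolynomial (Fin n × I) k) :=
  Ideal.span (Set.range fun p : Fin n × I × I => univPoly τ β p.1 p.2.1 p.2.2)

/-- The universal algebra `A(h,g)`. -/
noncomputable abbrev univAlg {k : Type*} [Field k] {n : ℕ} {I : Type*}
    (τ : Fin n → Fin n → Fin n → k) (β : I → I → I →₀ k) :=
  MvPolynomial (Fin n × I) k ⧸ univIdeal τ β

/-- The generator `x_{si}` of `A(h,g)`. -/
noncomputable def univGen {k : Type*} [Field k] {n : ℕ} {I : Type*}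
    (τ : Fin n → Fin n → Fin n → k) (β : I → I → I →₀ k)
    (s : Fin n) (i : I) : univAlg τ β :=
  Ideal.Quotient.mk (univIdeal τ β) (X (s, i))

/-! The relations `P_{(a,i,j)} = 0` holding in `A(h,g)` say precisely that the `e_a`-coordinates
of `η [f_i, f_j]` and of `[η f_i, η f_j]` agree. Hence the bilinear maps `(u, v) ↦ η [u, v]` and
`(u, v) ↦ [η u, η v]` coincide on pairs of basis vectors, and so everywhere. -/

theorem linearCombination_univGen {k : Type*} [Field k] {n : ℕ} {I : Type*}
    (τ : Fin n → Fin n → Fin n → k) (β : I → I → I →₀ k) (a : Fin n) (i j : I) :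
    Finsupp.linearCombination k (univGen τ β a) (β i j) =
      ∑ s, ∑ t, τ s t a • (univGen τ β s i * univGen τ β t j) := by
  have h : Ideal.Quotient.mkₐ k (univIdeal τ β) (univPoly τ β a i j) = 0 :=
    Ideal.Quotient.eq_zero_iff_mem.mpr (Ideal.subset_span ⟨(a, i, j), rfl⟩)
  simp only [univPoly, ← smul_eq_C_mul, map_sub, map_sum, map_smul, map_mul,
    Finsupp.sum, sub_eq_zero, Ideal.Quotient.mkₐ_eq_mk] at h
  simpa [Finsupp.linearCombination_apply, Finsupp.sum, univGen, smul_mul_assoc] using h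

section TensorCoordinates

variable {R M N ι I : Type*} [CommSemiring R] [AddCommMonoid M] [Module R M]
  [AddCommMonoid N] [Module R N] [Fintype ι]

theorem Finsupp.lhom_eq_sum_tmul_linearCombination (η : (I →₀ R) →ₗ[R] N ⊗[R] M)
    (y : ι → N) (g : ι → I → M) (hη : ∀ i, η (Finsupp.single i 1) = ∑ s, y s ⊗ₜ[R] g s i)
    (w : I →₀ R) : η w = ∑ s, y s ⊗ₜ[R] Finsupp.linearCombination R (g s) w := by
  suffices η = ∑ s, (TensorProduct.mk R N M (y s)).comp (Finsupp.linearCombination R (g s)) by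
    simp [this]
  exact Finsupp.basisSingleOne.ext fun i => by simp [hη]

theorem sum_single_tmul_sum_sum_smul [DecidableEq ι] {κ₁ κ₂ : Type*} [Fintype κ₁] [Fintype κ₂]
    (c : κ₁ → κ₂ → ι → R) (m : κ₁ → κ₂ → M) :
    ∑ a, Pi.single a (1 : R) ⊗ₜ[R] (∑ s, ∑ t, c s t a • m s t) = ∑ s, ∑ t, c s t ⊗ₜ[R] m s t := by
  have expand : ∀ s t, c s t ⊗ₜ[R] m s t = ∑ a, Pi.single a (1 : R) ⊗ₜ[R] (c s t a • m s t) := by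
    intro s t
    conv_lhs => rw [← Finset.univ_sum_single (c s t), sum_tmul]
    simp_rw [← smul_tmul, ← Pi.single_smul, smul_eq_mul, mul_one]
  simp_rw [expand, tmul_sum]
  rw [Finset.sum_comm]
  exact Finset.sum_congr rfl fun _ _ => Finset.sum_comm

end TensorCoordinates

theorem stmt_2 (k : Type*) [Field k] (n : ℕ) (I : Type*)
    (τ : Fin n → Fin n → Fin n → k) (β : I → I → I →₀ k)
    (bH : (Fin n → k) →ₗ[k] (Fin n → k) →ₗ[k] (Fin n → k))
    (hbH : ∀ i j : Fin n, bH (Pi.single i 1) (Pi.single j 1) = fun s => τ i j s)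
    (bG : (I →₀ k) →ₗ[k] (I →₀ k) →ₗ[k] (I →₀ k))
    (hbG : ∀ i j : I, bG (Finsupp.single i 1) (Finsupp.single j 1) = β i j)
    (B : (Fin n → k) ⊗[k] univAlg τ β →ₗ[k] (Fin n → k) ⊗[k] univAlg τ β →ₗ[k]
      (Fin n → k) ⊗[k] univAlg τ β)
    (hB : ∀ (x y : Fin n → k) (a c : univAlg τ β),
      B (x ⊗ₜ[k] a) (y ⊗ₜ[k] c) = bH x y ⊗ₜ[k] (a * c))
    (η : (I →₀ k) →ₗ[k] (Fin n → k) ⊗[k] univAlg τ β)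
    (hη : ∀ i : I, η (Finsupp.single i 1) =
      ∑ s : Fin n, Pi.single s 1 ⊗ₜ[k] univGen τ β s i) :
    ∀ u v : I →₀ k, η (bG u v) = B (η u) (η v) := by
  suffices bG.compr₂ η = B.compl₁₂ η η from fun u v => LinearMap.congr_fun₂ this u v
  refine LinearMap.ext_basis Finsupp.basisSingleOne Finsupp.basisSingleOne fun i j => ?_
  calc η (bG (Finsupp.single i 1) (Finsupp.single j 1))
      = ∑ a, Pi.single a 1 ⊗ₜ[k] Finsupp.linearCombination k (univGen τ β a) (β i j) := by
        rw [hbG, Finsupp.lhom_eq_sum_tmul_linearCombination η _ _ hη]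
    _ = ∑ a, Pi.single a 1 ⊗ₜ[k] ∑ s, ∑ t, τ s t a • (univGen τ β s i * univGen τ β t j) := by
        simp_rw [linearCombination_univGen]
    _ = ∑ s, ∑ t, (fun a => τ s t a) ⊗ₜ[k] (univGen τ β s i * univGen τ β t j) :=
        sum_single_tmul_sum_sum_smul _ _
    _ = B (η (Finsupp.single i 1)) (η (Finsupp.single j 1)) := by
        rw [hη, hη, map_sum B, LinearMap.sum_apply]
        simp_rw [map_sum, hB, hbH]
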